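/- Under the ε-TS algorithm, for any arm a ≠ 1 and any δ with 0 < δ < 1 − μ_a, setting C(t) = 8 ln t / δ², it holds for every t ≥ 1 that P(∃ s ≤ t : θ_a(s) > μ_a + δ and N_a(s) > C(t)) ≤ 2/t². -/

import Mathlib

open MeasureTheory ProbabilityTheory Filter Real
open scoped ENNReal

noncomputable section

/-- KL divergence between Bernoulli distributions of means `p` and `q` (real-valued version). -/
def klBern (p q : ℝ) : ℝ :=
  p * Real.log (p / q) + (1 - p) * Real.log ((1 - p) / (1 - q))

/-- KL divergence between Bernoulli distributions of means `p` and `q`, with the conventions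
`d(p,q) = ∞` if `p < 1` and `q ≥ 1`, or if `p > 0` and `q = 0`. -/
def klBernE (p q : ℝ) : ℝ≥0∞ :=
  if (p < 1 ∧ 1 ≤ q) ∨ (0 < p ∧ q = 0) then ⊤ else ENNReal.ofReal (klBern p q)

/-- The Bernoulli law with mean `p`, as a measure on `ℝ`. -/
def bernoulliLaw (p : ℝ) : Measure ℝ :=
  ENNReal.ofReal p • Measure.dirac (1 : ℝ) + ENNReal.ofReal (1 - p) • Measure.dirac (0 : ℝ)

/-- The uniform law on `[0,1]`, as a measure on `ℝ`. -/
def uniform01 : Measure ℝ := volume.restrict (Set.Icc (0 : ℝ) 1)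

/-- The cumulative distribution function of the `Beta(a, b)` distribution (for positive integer
parameters), evaluated at `x`. -/
def betaCDF (a b : ℕ) (x : ℝ) : ℝ :=
  (∫ y in (0 : ℝ)..x, y ^ (a - 1) * (1 - y) ^ (b - 1)) /
    (∫ y in (0 : ℝ)..1, y ^ (a - 1) * (1 - y) ^ (b - 1))

/-- The generalized inverse cdf of the `Beta(a, b)` distribution: applied to a uniform random
variable on `[0,1]`, it produces a `Beta(a, b)`-distributed random variable. -/
def betaInvCDF (a b : ℕ) (u : ℝ) : ℝ :=
  sInf {x : ℝ | x ∈ Set.Icc (0 : ℝ) 1 ∧ u ≤ betaCDF a b x}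

variable {K : ℕ} {Ω : Type*}

/-- `pulls arm a t ω` is the number of rounds `τ ∈ {1, …, t-1}` in which arm `a` was played,
i.e. `N_a(t)`, the number of pulls of arm `a` before round `t`. -/
def pulls (arm : ℕ → Ω → Fin K) (a : Fin K) (t : ℕ) (ω : Ω) : ℕ :=
  ∑ τ ∈ Finset.Ico 1 t, if arm τ ω = a then 1 else 0

/-- `rewSum arm X a t ω` is `S_a(t)`, the sum of the rewards observed from arm `a` before
round `t`, where `X a k` is the reward obtained on the `k`-th pull of arm `a`. -/
def rewSum (arm : ℕ → Ω → Fin K) (X : Fin K → ℕ → Ω → ℝ) (a : Fin K) (t : ℕ) (ω : Ω) : ℝ :=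
  ∑ k ∈ Finset.Icc 1 (pulls arm a t ω), X a k ω

/-- `empMean arm X a t ω` is `μ̂_a(t) = S_a(t) / N_a(t)` (and `0` if `N_a(t) = 0`). -/
def empMean (arm : ℕ → Ω → Fin K) (X : Fin K → ℕ → Ω → ℝ) (a : Fin K) (t : ℕ) (ω : Ω) : ℝ :=
  if pulls arm a t ω = 0 then 0 else rewSum arm X a t ω / (pulls arm a t ω : ℝ)

/-- The first Beta-posterior parameter of `ε`-TS: `α_a(t) = ⌊S_a(t)/(1-ε)⌋ + 1`. -/
def alphaTS (ε : ℝ) (arm : ℕ → Ω → Fin K) (X : Fin K → ℕ → Ω → ℝ) (a : Fin K) (t : ℕ)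
    (ω : Ω) : ℕ :=
  ⌊rewSum arm X a t ω / (1 - ε)⌋₊ + 1

/-- The second Beta-posterior parameter of `ε`-TS: `β_a(t) = N_a(t) + 2 - α_a(t)`. -/
def betaTS (ε : ℝ) (arm : ℕ → Ω → Fin K) (X : Fin K → ℕ → Ω → ℝ) (a : Fin K) (t : ℕ)
    (ω : Ω) : ℕ :=
  pulls arm a t ω + 2 - alphaTS ε arm X a t ω

/-- The posterior sample `θ_a(t)` used by `ε`-TS: if `μ̂_a(t) > 1 - ε` then `θ_a(t) = μ̂_a(t)`;
otherwise `θ_a(t) = (1-ε)·Y` where `Y ~ Beta(α_a(t), β_a(t))` is obtained by applying the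
inverse Beta cdf to the fresh independent uniform random variable `U a t`. -/
def thetaTS (ε : ℝ) (arm : ℕ → Ω → Fin K) (X : Fin K → ℕ → Ω → ℝ)
    (U : Fin K → ℕ → Ω → ℝ) (a : Fin K) (t : ℕ) (ω : Ω) : ℝ :=
  if 1 - ε < empMean arm X a t ω then empMean arm X a t ω
  else (1 - ε) * betaInvCDF (alphaTS ε arm X a t ω) (betaTS ε arm X a t ω) (U a t ω)

/-- An execution of the `ε`-TS algorithm on a `K`-armed Bernoulli bandit with mean vector `μ`:
`X a k` is the (i.i.d. `Bernoulli(μ a)`) reward of the `k`-th pull of arm `a`, `U a t` are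
i.i.d. uniform random variables on `[0,1]` (independent of the rewards) providing the
posterior samples via the inverse-cdf construction, and at every round `t ≥ 1` the played arm
`arm t` maximizes the posterior samples `θ_·(t)`. -/
structure EpsTS (K : ℕ) (μ : Fin K → ℝ) (ε : ℝ) (Ω : Type*) [MeasurableSpace Ω] where
  P : Measure Ω
  isProb : IsProbabilityMeasure P
  X : Fin K → ℕ → Ω → ℝ
  U : Fin K → ℕ → Ω → ℝ
  arm : ℕ → Ω → Fin K
  hXmeas : ∀ a n, Measurable (X a n)
  hUmeas : ∀ a t, Measurable (U a t)
  hArmMeas : ∀ t, Measurable (arm t)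
  hXlaw : ∀ a n, P.map (X a n) = bernoulliLaw (μ a)
  hUlaw : ∀ a t, P.map (U a t) = uniform01
  hIndep : iIndepFun
    (Sum.elim (fun p : Fin K × ℕ => X p.1 p.2) (fun p : Fin K × ℕ => U p.1 p.2)) P
  hArgmax : ∀ t, 1 ≤ t → ∀ ω b, thetaTS ε arm X U b t ω ≤ thetaTS ε arm X U (arm t ω) t ω

/-- `f` is an `ε`-gap function: `f : [0,1] → [0,∞)` with `f(Δ) = 0` for `Δ ∈ [0,ε]` and
`f(Δ) > 0` for `Δ > ε`. -/
def IsEpsGap (ε : ℝ) (f : ℝ → ℝ) : Prop :=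
  (∀ Δ, 0 ≤ Δ → Δ ≤ 1 → 0 ≤ f Δ) ∧ (∀ Δ, 0 ≤ Δ → Δ ≤ ε → f Δ = 0) ∧
    ∀ Δ, ε < Δ → Δ ≤ 1 → 0 < f Δ

/-- The lenient regret `R_f(T) = E[Σ_{t=1}^T f(Δ_{a_t})]` of an `ε`-TS execution, where
`Δ_a = μ* − μ_a` and `μ* = max_a μ_a`. -/
def lenientRegret {K : ℕ} {μ : Fin K → ℝ} {ε : ℝ} {Ω : Type*} [MeasurableSpace Ω]
    (E : EpsTS K μ ε Ω) (f : ℝ → ℝ) (T : ℕ) : ℝ :=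
  ∫ ω, (∑ t ∈ Finset.Icc 1 T, f ((⨆ b, μ b) - μ (E.arm t ω))) ∂E.P

/-!
Fix `n = N_a(s) > 8 ln t / δ²` with `θ_a(s) > μ_a + δ`. Either the first `n` rewards of arm `a`
average more than `μ_a + δ/2`, which by Hoeffding's inequality has probability at most
`exp(-n δ² / 2) ≤ t⁻⁴`, or `θ_a(s) = (1 - ε) Y` is a Beta sample (had `θ_a(s)` been the empirical
mean, it would be at most `μ_a + δ/2`). Then `α_a(s) - 1 ≤ n (μ_a + δ/2) / (1 - ε)`, and the
Beta cdf at `x = (μ_a + δ) / (1 - ε)` is the binomial tail `P(Bin(n + 1, x) ≥ α_a(s))`, which a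
Chernoff bound puts above `1 - e^{1/2} t⁻⁴`; so the uniform variable that drives the sample exceeds
that level. A union bound over the `< t` values of `n` and the `t` rounds `s` gives
`(t - 1 + e^{1/2} t) / t⁴ ≤ 2 / t²`.
-/

open Finset

section BernoulliLaw

variable {p : ℝ}

lemma isProbabilityMeasure_bernoulliLaw (hp0 : 0 ≤ p) (hp1 : p ≤ 1) :
    IsProbabilityMeasure (bernoulliLaw p) := by
  constructor
  simp [bernoulliLaw, ← ENNReal.ofReal_add hp0 (sub_nonneg.2 hp1)]

lemma ae_mem_Icc_bernoulliLaw : ∀ᵐ x ∂bernoulliLaw p, x ∈ Set.Icc (0 : ℝ) 1 := by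
  rw [bernoulliLaw, ae_add_measure_iff]
  exact ⟨Measure.ae_smul_measure (by simp) _, Measure.ae_smul_measure (by simp) _⟩

lemma integral_bernoulliLaw (hp0 : 0 ≤ p) (hp1 : p ≤ 1) (f : ℝ → ℝ) :
    ∫ x, f x ∂bernoulliLaw p = p * f 1 + (1 - p) * f 0 := by
  rw [bernoulliLaw, integral_add_measure, integral_smul_measure, integral_smul_measure,
    integral_dirac, integral_dirac, ENNReal.toReal_ofReal hp0,
    ENNReal.toReal_ofReal (sub_nonneg.2 hp1), smul_eq_mul, smul_eq_mul]
  all_goals exact (integrable_dirac enorm_lt_top).smul_measure ENNReal.ofReal_ne_top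

/-- Hoeffding's lemma for a two-point law. -/
lemma mul_exp_add_one_sub_le_exp (hp0 : 0 ≤ p) (hp1 : p ≤ 1) (u : ℝ) :
    p * exp u + (1 - p) ≤ exp (p * u + u ^ 2 / 8) := by
  have := isProbabilityMeasure_bernoulliLaw hp0 hp1
  have hmgf :=
    (hasSubgaussianMGF_of_mem_Icc aemeasurable_id (ae_mem_Icc_bernoulliLaw (p := p))).mgf_le u
  simp only [mgf, id, integral_bernoulliLaw hp0 hp1] at hmgf
  have hcentered : p * exp (u - p * u) + (1 - p) * exp (-(p * u)) ≤ exp (u ^ 2 / 8) := by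
    convert hmgf using 1
    · ring_nf
    · norm_num
      ring
  calc p * exp u + (1 - p)
      = exp (p * u) * (p * exp (u - p * u) + (1 - p) * exp (-(p * u))) := by
        rw [exp_sub, exp_neg]
        field_simp
    _ ≤ exp (p * u) * exp (u ^ 2 / 8) := by gcongr
    _ = exp (p * u + u ^ 2 / 8) := (exp_add _ _).symm

variable {Ω : Type*} [MeasurableSpace Ω] {P : Measure Ω}

lemma hasSubgaussianMGF_sub_of_map_eq_bernoulliLaw [IsProbabilityMeasure P] (hp0 : 0 ≤ p)
    (hp1 : p ≤ 1) {Y : Ω → ℝ} (hY : Measurable Y) (hlaw : P.map Y = bernoulliLaw p) :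
    HasSubgaussianMGF (fun ω ↦ Y ω - p) (1 / 4) P := by
  have hmem : ∀ᵐ ω ∂P, Y ω ∈ Set.Icc (0 : ℝ) 1 :=
    ae_of_ae_map hY.aemeasurable (hlaw ▸ ae_mem_Icc_bernoulliLaw)
  have hmean : P[Y] = p := by
    have := integral_map hY.aemeasurable (aestronglyMeasurable_id (μ := P.map Y))
    simp only [id, hlaw, integral_bernoulliLaw hp0 hp1] at this
    linarith
  convert hasSubgaussianMGF_of_mem_Icc hY.aemeasurable hmem using 2
  · rw [hmean]
  · norm_num

lemma measure_sum_bernoulli_ge_le [IsProbabilityMeasure P] (hp0 : 0 ≤ p) (hp1 : p ≤ 1)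
    {Y : ℕ → Ω → ℝ} (hmeas : ∀ k, Measurable (Y k)) (hlaw : ∀ k, P.map (Y k) = bernoulliLaw p)
    (hindep : iIndepFun Y P) (n : ℕ) {d : ℝ} (hd : 0 ≤ d) :
    P {ω | n * (p + d) ≤ ∑ k ∈ Icc 1 n, Y k ω} ≤ ENNReal.ofReal (exp (-2 * n * d ^ 2)) := by
  have hindep' : iIndepFun (fun k ω ↦ Y k ω - p) P :=
    hindep.comp (fun _ y ↦ y - p) fun _ ↦ measurable_id.sub_const p
  have hhoeff := HasSubgaussianMGF.measure_sum_ge_le_of_iIndepFun hindep' (c := fun _ ↦ 1 / 4)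
    (s := Icc 1 n)
    (fun k _ ↦ hasSubgaussianMGF_sub_of_map_eq_bernoulliLaw hp0 hp1 (hmeas k) (hlaw k))
    (mul_nonneg n.cast_nonneg hd)
  have hset : {ω | n * (p + d) ≤ ∑ k ∈ Icc 1 n, Y k ω} =
      {ω | n * d ≤ ∑ k ∈ Icc 1 n, (Y k ω - p)} := by
    ext ω
    simp only [Set.mem_ofPred_eq, sum_sub_distrib, sum_const, Nat.card_Icc, add_tsub_cancel_right,
      nsmul_eq_mul]
    constructor <;> intro h <;> linarith
  rw [hset, ← ofReal_measureReal]
  refine ENNReal.ofReal_le_ofReal (hhoeff.trans_eq (congrArg exp ?_))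
  simp only [sum_const, Nat.card_Icc, add_tsub_cancel_right, nsmul_eq_mul, NNReal.coe_mul,
    NNReal.coe_natCast, NNReal.coe_div, NNReal.coe_one, NNReal.coe_ofNat]
  rcases eq_or_ne n 0 with rfl | hn
  · simp
  · field_simp
    ring

end BernoulliLaw

section UnionBound

variable {Ω : Type*} [MeasurableSpace Ω] {P : Measure Ω}

lemma measure_lt_le_of_map_eq_uniform01 {V : Ω → ℝ} (hV : Measurable V)
    (hlaw : P.map V = uniform01) (c : ℝ) :
    P {ω | c < V ω} ≤ ENNReal.ofReal (1 - c) := by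
  calc P {ω | c < V ω} = uniform01 (Set.Ioi c) := by
        rw [← hlaw, Measure.map_apply hV measurableSet_Ioi]
        rfl
    _ ≤ volume (Set.Ioc c 1) := by
        rw [uniform01, Measure.restrict_apply measurableSet_Ioi]
        exact measure_mono fun y hy ↦ ⟨hy.1, hy.2.2⟩
    _ = ENNReal.ofReal (1 - c) := Real.volume_Ioc

lemma measure_biUnion_le_card_mul {ι : Type*} (s : Finset ι) (A : ι → Set Ω) {r : ℝ}
    (h : ∀ i ∈ s, P (A i) ≤ ENNReal.ofReal r) :
    P (⋃ i ∈ s, A i) ≤ ENNReal.ofReal (#s * r) := by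
  calc P (⋃ i ∈ s, A i) ≤ ∑ i ∈ s, P (A i) := measure_biUnion_finset_le s A
    _ ≤ ∑ _i ∈ s, ENNReal.ofReal r := sum_le_sum h
    _ = ENNReal.ofReal (#s * r) := by
        rw [sum_const, nsmul_eq_mul, ENNReal.ofReal_mul (Nat.cast_nonneg _), ENNReal.ofReal_natCast]

end UnionBound

/-- `P(Bin(m, x) ≤ k)`. -/
def binomialCDF (m k : ℕ) (x : ℝ) : ℝ :=
  ∑ j ∈ range (k + 1), (m.choose j : ℝ) * x ^ j * (1 - x) ^ (m - j)

lemma hasDerivAt_binomialCDF (m k : ℕ) (x : ℝ) :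
    HasDerivAt (binomialCDF m k)
      (-((m.choose k : ℝ) * (m - k : ℕ) * x ^ k * (1 - x) ^ (m - k - 1))) x := by
  have hterm (j : ℕ) : HasDerivAt (fun y : ℝ ↦ y ^ j * (1 - y) ^ (m - j))
      (j * x ^ (j - 1) * (1 - x) ^ (m - j) - (m - j : ℕ) * x ^ j * (1 - x) ^ (m - j - 1)) x := by
    refine ((hasDerivAt_pow j x).fun_mul
      (((hasDerivAt_id x).const_sub 1).fun_pow (m - j))).congr_deriv ?_
    simp only [id]
    ring
  induction k with
  | zero =>
    have h0 : binomialCDF m 0 = fun y ↦ (1 - y) ^ m := by ext; simp [binomialCDF]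
    simpa [h0] using hterm 0
  | succ k ih =>
    have hchoose : (m.choose (k + 1) : ℝ) * (k + 1 : ℕ) = m.choose k * (m - k : ℕ) := by
      exact_mod_cast Nat.choose_succ_right_eq m k
    have hsum : binomialCDF m (k + 1) =
        binomialCDF m k +
          fun y : ℝ ↦ (m.choose (k + 1) : ℝ) * (y ^ (k + 1) * (1 - y) ^ (m - (k + 1))) := by
      ext y
      simp only [binomialCDF, sum_range_succ _ (k + 1), Pi.add_apply, mul_assoc]
    rw [hsum]
    refine (ih.add ((hterm (k + 1)).const_mul (m.choose (k + 1) : ℝ))).congr_deriv ?_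
    rw [Nat.add_sub_cancel, Nat.sub_sub]
    linear_combination (x ^ k * (1 - x) ^ (m - (k + 1))) * hchoose

lemma binomialCDF_zero (m k : ℕ) : binomialCDF m k 0 = 1 := by
  rw [binomialCDF, sum_eq_single 0 (fun j _ hj ↦ by simp [hj]) (by simp)]
  simp

lemma binomialCDF_one {m k : ℕ} (hk : k < m) : binomialCDF m k 1 = 0 :=
  sum_eq_zero fun j hj ↦ by simp [Nat.sub_ne_zero_of_lt ((mem_range.1 hj).trans_le hk)]

lemma integral_pow_mul_one_sub_pow {a b : ℕ} (ha : 1 ≤ a) (hb : 1 ≤ b) (x : ℝ) :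
    ∫ y in (0 : ℝ)..x, y ^ (a - 1) * (1 - y) ^ (b - 1) =
      (1 - binomialCDF (a + b - 1) (a - 1) x) / ((a + b - 1).choose (a - 1) * b) := by
  have hchoose : ((a + b - 1).choose (a - 1) : ℝ) ≠ 0 := by
    exact_mod_cast (Nat.choose_pos (by omega)).ne'
  have hb0 : (b : ℝ) ≠ 0 := by positivity
  have hderiv (y : ℝ) : HasDerivAt (fun z ↦ -binomialCDF (a + b - 1) (a - 1) z /
      ((a + b - 1).choose (a - 1) * b)) (y ^ (a - 1) * (1 - y) ^ (b - 1)) y := by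
    refine ((hasDerivAt_binomialCDF _ _ y).neg.div_const _).congr_deriv ?_
    rw [show a + b - 1 - (a - 1) = b by omega]
    field_simp
  rw [intervalIntegral.integral_eq_sub_of_hasDerivAt (fun y _ ↦ hderiv y)
    ((by fun_prop : Continuous fun y : ℝ ↦ y ^ (a - 1) * (1 - y) ^ (b - 1)).intervalIntegrable
      _ _),
    binomialCDF_zero]
  ring

lemma betaCDF_eq_one_sub_binomialCDF {a b : ℕ} (ha : 1 ≤ a) (hb : 1 ≤ b) (x : ℝ) :
    betaCDF a b x = 1 - binomialCDF (a + b - 1) (a - 1) x := by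
  have hc : ((a + b - 1).choose (a - 1) * b : ℝ) ≠ 0 := by
    have := Nat.choose_pos (show a - 1 ≤ a + b - 1 by omega)
    positivity
  rw [betaCDF, integral_pow_mul_one_sub_pow ha hb, integral_pow_mul_one_sub_pow ha hb,
    binomialCDF_one (by omega), sub_zero, div_div_div_cancel_right₀ hc, div_one]

lemma binomialCDF_le_exp {m k : ℕ} (hm : 0 < m) {x : ℝ} (hx0 : 0 ≤ x) (hx1 : x ≤ 1)
    (hkx : (k : ℝ) ≤ x * m) :
    binomialCDF m k x ≤ exp (-2 * (x * m - k) ^ 2 / m) := by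
  have hm' : (0 : ℝ) < m := by exact_mod_cast hm
  -- this `l` minimises the exponent `l k + m (-l x + l² / 8)` of the tilted bound below
  set l := 4 * (x * m - k) / m with hl
  have hl0 : 0 ≤ l := div_nonneg (by linarith) hm'.le
  have hkm : k ≤ m := by exact_mod_cast hkx.trans (by nlinarith : x * m ≤ m)
  have hw (j : ℕ) : 0 ≤ (m.choose j : ℝ) * x ^ j * (1 - x) ^ (m - j) := by
    have : 0 ≤ 1 - x := by linarith
    positivity
  calc binomialCDF m k x
      ≤ ∑ j ∈ range (m + 1),
          exp (l * (k - j)) * ((m.choose j : ℝ) * x ^ j * (1 - x) ^ (m - j)) := by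
        refine (sum_le_sum fun j hj ↦ le_mul_of_one_le_left (hw j) (one_le_exp ?_)).trans
          (sum_le_sum_of_subset_of_nonneg (range_subset_range.2 (by omega)) fun j _ _ ↦ by
            have := hw j; positivity)
        have : (j : ℝ) ≤ k := by exact_mod_cast Nat.lt_succ_iff.1 (mem_range.1 hj)
        nlinarith
    _ = exp (l * k) * (x * exp (-l) + (1 - x)) ^ m := by
        rw [add_pow, mul_sum]
        refine sum_congr rfl fun j _ ↦ ?_
        rw [mul_pow, ← exp_nat_mul, show l * (k - j) = l * k + j * -l by ring, exp_add]
        ring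
    _ ≤ exp (l * k) * exp (x * -l + (-l) ^ 2 / 8) ^ m := by
        gcongr
        exact mul_exp_add_one_sub_le_exp hx0 hx1 (-l)
    _ = exp (-2 * (x * m - k) ^ 2 / m) := by
        rw [← exp_nat_mul, ← exp_add, hl]
        congr 1
        field_simp
        ring

lemma betaInvCDF_le_one (a b : ℕ) (u : ℝ) : betaInvCDF a b u ≤ 1 := by
  rcases Set.eq_empty_or_nonempty {x : ℝ | x ∈ Set.Icc (0 : ℝ) 1 ∧ u ≤ betaCDF a b x} with h | h
  · rw [betaInvCDF, h, Real.sInf_empty]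
    exact zero_le_one
  · obtain ⟨x, hx⟩ := h
    exact (csInf_le ⟨0, fun y hy ↦ hy.1.1⟩ hx).trans hx.1.2

lemma betaCDF_lt_of_lt_betaInvCDF {a b : ℕ} {u x : ℝ} (hx : x ∈ Set.Icc (0 : ℝ) 1)
    (h : x < betaInvCDF a b u) : betaCDF a b x < u := by
  by_contra! hux
  exact h.not_ge (csInf_le ⟨0, fun y hy ↦ hy.1.1⟩ ⟨hx, hux⟩)

lemma one_sub_exp_lt_of_lt_betaInvCDF {a b : ℕ} (ha : 1 ≤ a) (hb : 1 ≤ b) {x u g : ℝ}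
    (hx : 0 ≤ x) (hxu : x < betaInvCDF a b u) (hg : 0 ≤ g)
    (hk : ((a - 1 : ℕ) : ℝ) + g ≤ x * (a + b - 1 : ℕ)) :
    1 - exp (-2 * g ^ 2 / (a + b - 1 : ℕ)) < u := by
  have hx1 : x ≤ 1 := hxu.le.trans (betaInvCDF_le_one a b u)
  have hcdf := betaCDF_lt_of_lt_betaInvCDF ⟨hx, hx1⟩ hxu
  rw [betaCDF_eq_one_sub_binomialCDF ha hb] at hcdf
  have hm : (0 : ℝ) < (a + b - 1 : ℕ) := Nat.cast_pos.2 (by omega)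
  have hexp : exp (-2 * (x * (a + b - 1 : ℕ) - (a - 1 : ℕ)) ^ 2 / (a + b - 1 : ℕ)) ≤
      exp (-2 * g ^ 2 / (a + b - 1 : ℕ)) := by
    gcongr exp ?_
    rw [div_le_div_iff_of_pos_right hm]
    nlinarith
  linarith [binomialCDF_le_exp (m := a + b - 1) (k := a - 1) (by omega) hx hx1 (by linarith)]

section Pathwise

variable {K : ℕ} {Ω : Type*} {arm : ℕ → Ω → Fin K} {X : Fin K → ℕ → Ω → ℝ} {a : Fin K}
  {s : ℕ} {ω : Ω}

lemma pulls_le_sub_one : pulls arm a s ω ≤ s - 1 := by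
  simpa [pulls] using card_filter_le (Ico 1 s) (fun τ ↦ arm τ ω = a)

lemma empMean_of_pulls_ne_zero (h : pulls arm a s ω ≠ 0) :
    empMean arm X a s ω = rewSum arm X a s ω / pulls arm a s ω :=
  if_neg h

variable {ε : ℝ} {U : Fin K → ℕ → Ω → ℝ}

lemma alphaTS_le_pulls_add_one (hε : ε < 1)
    (hS : rewSum arm X a s ω ≤ pulls arm a s ω * (1 - ε)) :
    alphaTS ε arm X a s ω ≤ pulls arm a s ω + 1 :=
  Nat.add_le_add_right (Nat.floor_le_of_le ((div_le_iff₀ (by linarith)).2 hS)) 1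

lemma alphaTS_sub_one_le {r : ℝ} (hε : ε < 1) (hr : 0 ≤ r)
    (hS : rewSum arm X a s ω ≤ pulls arm a s ω * r) :
    ((alphaTS ε arm X a s ω - 1 : ℕ) : ℝ) ≤ pulls arm a s ω * r / (1 - ε) := by
  have h1ε : 0 < 1 - ε := by linarith
  rw [alphaTS, Nat.add_sub_cancel]
  calc (⌊rewSum arm X a s ω / (1 - ε)⌋₊ : ℝ) ≤ ⌊pulls arm a s ω * r / (1 - ε)⌋₊ := by gcongr
    _ ≤ pulls arm a s ω * r / (1 - ε) := Nat.floor_le (by positivity)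

lemma one_sub_exp_lt_uniform_of_lt_thetaTS {q δ : ℝ} (hε : ε ∈ Set.Ioo 0 1) (hq : 0 ≤ q)
    (hδ : 0 < δ) (hn : pulls arm a s ω ≠ 0) (hmean : empMean arm X a s ω ≤ q + δ / 2)
    (hθ : q + δ < thetaTS ε arm X U a s ω) :
    1 - exp (-2 * (pulls arm a s ω * δ / 2) ^ 2 / (pulls arm a s ω + 1 : ℕ)) < U a s ω := by
  obtain ⟨hε0, hε1⟩ := hε
  have h1ε : 0 < 1 - ε := by linarith
  have hbeta : ¬ 1 - ε < empMean arm X a s ω := fun h ↦ by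
    rw [thetaTS, if_pos h] at hθ
    linarith
  rw [thetaTS, if_neg hbeta] at hθ
  set n := pulls arm a s ω
  have hn' : (0 : ℝ) < n := by positivity
  rw [not_lt, empMean_of_pulls_ne_zero hn, div_le_iff₀ hn', mul_comm] at hbeta
  rw [empMean_of_pulls_ne_zero hn, div_le_iff₀ hn', mul_comm] at hmean
  set A := alphaTS ε arm X a s ω
  have hA := alphaTS_le_pulls_add_one hε1 hbeta
  have hA1 : 1 ≤ A := Nat.le_add_left 1 _
  have hAB : A + betaTS ε arm X a s ω - 1 = n + 1 := by
    simp only [betaTS]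
    omega
  set x := (q + δ) / (1 - ε)
  have hxu : x < betaInvCDF A (betaTS ε arm X a s ω) (U a s ω) := by
    rw [div_lt_iff₀ h1ε]
    linarith
  have hgap : ((A - 1 : ℕ) : ℝ) + n * δ / 2 ≤ x * (n + 1 : ℕ) := by
    have : n * δ / 2 ≤ n * δ / 2 / (1 - ε) := le_div_self (by positivity) h1ε (by linarith)
    have : n * (q + δ / 2) / (1 - ε) + n * δ / 2 / (1 - ε) ≤ x * (n + 1 : ℕ) := by
      rw [← add_div, div_mul_eq_mul_div, div_le_div_iff_of_pos_right h1ε]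
      push_cast
      nlinarith
    linarith [alphaTS_sub_one_le hε1 (by positivity) hmean]
  have hbound := one_sub_exp_lt_of_lt_betaInvCDF (g := n * δ / 2) hA1 (by omega)
    (div_nonneg (by linarith) h1ε.le) hxu (by positivity) (by rwa [hAB])
  rwa [hAB] at hbound

lemma setOf_exists_lt_thetaTS_subset {q δ : ℝ} {t : ℕ} (hε : ε ∈ Set.Ioo 0 1) (hq : 0 ≤ q)
    (hδ0 : 0 < δ) (hδ1 : δ ≤ 1) :
    {ω | ∃ s : ℕ, 1 ≤ s ∧ s ≤ t ∧ q + δ < thetaTS ε arm X U a s ω ∧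
        8 * log t / δ ^ 2 < (pulls arm a s ω : ℝ)} ⊆
      (⋃ n ∈ (Ico 1 t).filter (fun n : ℕ ↦ 8 * log t / δ ^ 2 < n),
          {ω | n * (q + δ / 2) ≤ ∑ k ∈ Icc 1 n, X a k ω}) ∪
        ⋃ s ∈ Icc 1 t, {ω | 1 - exp (1 / 2 - 4 * log t) < U a s ω} := by
  rintro ω ⟨s, hs1, hst, hθ, hN⟩
  have hlog : 8 * log t < pulls arm a s ω * δ ^ 2 := by
    rwa [div_lt_iff₀ (by positivity)] at hN
  have hn : pulls arm a s ω ≠ 0 := by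
    rintro h
    rw [h, Nat.cast_zero] at hN
    exact hN.not_ge (by have := log_natCast_nonneg t; positivity)
  have hn' : (0 : ℝ) < pulls arm a s ω := by positivity
  by_cases hmean : empMean arm X a s ω ≤ q + δ / 2
  · refine Or.inr (Set.mem_biUnion (mem_Icc.2 ⟨hs1, hst⟩) ?_)
    refine (one_sub_exp_lt_uniform_of_lt_thetaTS hε hq hδ0 hn hmean hθ).trans_le' ?_
    gcongr 1 - exp ?_
    push_cast
    rw [div_le_iff₀ (by positivity)]
    nlinarith [pow_le_one₀ hδ0.le hδ1 (n := 2)]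
  · refine Or.inl (Set.mem_biUnion (mem_filter.2 ⟨mem_Ico.2 ⟨by omega, ?_⟩, hN⟩) ?_)
    · have := pulls_le_sub_one (arm := arm) (a := a) (s := s) (ω := ω)
      omega
    · rw [not_le, empMean_of_pulls_ne_zero hn, lt_div_iff₀ hn'] at hmean
      exact hmean.le.trans_eq' (mul_comm _ _)

end Pathwise

lemma sub_one_mul_exp_add_mul_exp_le {t : ℝ} (ht : 1 ≤ t) :
    (t - 1) * exp (-(4 * log t)) + t * exp (1 / 2 - 4 * log t) ≤ 2 / t ^ 2 := by
  have ht0 : 0 < t := by linarith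
  have hpow : exp (4 * log t) = t ^ 4 := by
    rw [← exp_log (pow_pos ht0 4), log_pow]
    norm_num
  have hhalf : exp (1 / 2) < 2 :=
    (lt_log_iff_exp_lt two_pos).1 (by linarith [log_two_gt_d9])
  have key : (t - 1) + t * exp (1 / 2) ≤ 2 * t ^ 2 := by nlinarith
  calc (t - 1) * exp (-(4 * log t)) + t * exp (1 / 2 - 4 * log t)
      = ((t - 1) + t * exp (1 / 2)) / t ^ 4 := by
        rw [exp_neg, exp_sub, hpow]
        ring
    _ ≤ 2 * t ^ 2 / t ^ 4 := by gcongr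
    _ = 2 / t ^ 2 := by field_simp

namespace EpsTS

variable {K : ℕ} {μ : Fin K → ℝ} {ε : ℝ} {Ω : Type*} [MeasurableSpace Ω] (E : EpsTS K μ ε Ω)

lemma iIndepFun_rewards (a : Fin K) : iIndepFun (fun k ↦ E.X a k) E.P :=
  E.hIndep.precomp (g := fun k ↦ Sum.inl (a, k)) fun _ _ h ↦ by simpa using h

lemma measure_biUnion_sum_rewards_ge_le {a : Fin K} (hμ : μ a ∈ Set.Icc (0 : ℝ) 1) {δ : ℝ}
    (hδ : 0 < δ) {t : ℕ} (ht : 1 ≤ t) :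
    E.P (⋃ n ∈ (Ico 1 t).filter (fun n : ℕ ↦ 8 * log t / δ ^ 2 < n),
        {ω | n * (μ a + δ / 2) ≤ ∑ k ∈ Icc 1 n, E.X a k ω}) ≤
      ENNReal.ofReal ((t - 1) * exp (-(4 * log t))) := by
  have := E.isProb
  refine (measure_biUnion_le_card_mul (r := exp (-(4 * log t))) _ _ fun n hn ↦ ?_).trans
    (ENNReal.ofReal_le_ofReal ?_)
  · refine (measure_sum_bernoulli_ge_le hμ.1 hμ.2 (E.hXmeas a) (E.hXlaw a)
      (E.iIndepFun_rewards a) n (by positivity)).trans (ENNReal.ofReal_le_ofReal (exp_le_exp.2 ?_))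
    have := (mem_filter.1 hn).2
    rw [div_lt_iff₀ (by positivity)] at this
    nlinarith
  · have hcard := (card_filter_le (Ico 1 t) (fun n : ℕ ↦ 8 * log t / δ ^ 2 < n)).trans_eq
      (Nat.card_Ico 1 t)
    gcongr
    rw [← Nat.cast_pred (by omega)]
    exact_mod_cast hcard

lemma measure_biUnion_uniform_gt_le (a : Fin K) (t : ℕ) (c : ℝ) :
    E.P (⋃ s ∈ Icc 1 t, {ω | c < E.U a s ω}) ≤ ENNReal.ofReal (t * (1 - c)) := by
  simpa using measure_biUnion_le_card_mul (Icc 1 t) _ fun s _ ↦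
    measure_lt_le_of_map_eq_uniform01 (E.hUmeas a s) (E.hUlaw a s) c

end EpsTS

theorem epsTS_prob_exists_theta_high_saturated_general {K : ℕ}
    (ε : ℝ) (hε : ε ∈ Set.Ioo (0 : ℝ) 1)
    (μ : Fin K → ℝ) (hμ : ∀ a, μ a ∈ Set.Icc (0 : ℝ) 1)
    {Ω : Type*} [MeasurableSpace Ω] (E : EpsTS K μ ε Ω)
    (a : Fin K) (δ : ℝ) (hδ0 : 0 < δ) (hδ1 : δ < 1 - μ a)
    (t : ℕ) (ht : 1 ≤ t) :
    E.P {ω | ∃ s : ℕ, 1 ≤ s ∧ s ≤ t ∧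
        μ a + δ < thetaTS ε E.arm E.X E.U a s ω ∧
        8 * Real.log t / δ ^ 2 < (pulls E.arm a s ω : ℝ)}
      ≤ ENNReal.ofReal (2 / (t : ℝ) ^ 2) := by
  have ht' : (1 : ℝ) ≤ t := by exact_mod_cast ht
  calc _ ≤ E.P (_ ∪ _) :=
        measure_mono (setOf_exists_lt_thetaTS_subset hε (hμ a).1 hδ0 (by linarith [(hμ a).1]))
    _ ≤ ENNReal.ofReal ((t - 1) * exp (-(4 * log t))) +
          ENNReal.ofReal (t * (1 - (1 - exp (1 / 2 - 4 * log t)))) :=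
        (measure_union_le _ _).trans (add_le_add (E.measure_biUnion_sum_rewards_ge_le (hμ a) hδ0 ht)
          (E.measure_biUnion_uniform_gt_le a t _))
    _ ≤ ENNReal.ofReal (2 / (t : ℝ) ^ 2) := by
        rw [sub_sub_cancel, ← ENNReal.ofReal_add (by nlinarith [exp_pos (-(4 * log t))])
          (by positivity)]
        exact ENNReal.ofReal_le_ofReal (sub_one_mul_exp_add_mul_exp_le ht')

/-- **Lemma (saturated arms rarely have high posterior samples).** Under `ε`-TS, for any
suboptimal arm `a ≠ 1` and any `δ` with `0 < δ < 1 − μ_a`, setting `C(t) = 8 ln t / δ²`, it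
holds for every `t ≥ 1` that
`P(∃ s ≤ t : θ_a(s) > μ_a + δ ∧ N_a(s) > C(t)) ≤ 2/t²`. -/
theorem epsTS_prob_exists_theta_high_saturated {K : ℕ} [NeZero K] (hK : 2 ≤ K)
    (ε : ℝ) (hε : ε ∈ Set.Ioo (0 : ℝ) 1)
    (μ : Fin K → ℝ) (hμ : ∀ a, μ a ∈ Set.Icc (0 : ℝ) 1)
    (hSorted : ∀ a b : Fin K, a ≤ b → μ b ≤ μ a)
    (hGap : ∀ a : Fin K, a ≠ 0 → ε < μ 0 - μ a)
    {Ω : Type*} [MeasurableSpace Ω] (E : EpsTS K μ ε Ω)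
    (a : Fin K) (ha : a ≠ 0) (δ : ℝ) (hδ0 : 0 < δ) (hδ1 : δ < 1 - μ a)
    (t : ℕ) (ht : 1 ≤ t) :
    E.P {ω | ∃ s : ℕ, 1 ≤ s ∧ s ≤ t ∧
        μ a + δ < thetaTS ε E.arm E.X E.U a s ω ∧
        8 * Real.log t / δ ^ 2 < (pulls E.arm a s ω : ℝ)}
      ≤ ENNReal.ofReal (2 / (t : ℝ) ^ 2) :=
  epsTS_prob_exists_theta_high_saturated_general ε hε μ hμ E a δ hδ0 hδ1 t ht

end
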